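/- Let B ⊆ ℝ³ be compact, and for each m ∈ B let A_m : H → K be a bounded linear operator between Hilbert spaces such that m ↦ A_m is Lipschitz in operator norm with constant L and sup_{m∈B} ‖A_m‖ ≤ M. Fix ũ ∈ K and C > 0, and define f_C(m) = min_{g∈H} (‖A_m g − ũ‖² + C‖g‖²). Then f_C is Lipschitz continuous on B and achieves its minimum on B. -/

import Mathlib

/-!
Testing `g = 0` shows that every minimal value is at most `‖ũ‖²`, so every minimizer `g` has
`C ‖g‖² ≤ ‖ũ‖²`. Evaluating the functional of `A_m` at a minimizer `g` for `m'` gives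
`f_C(m) - f_C(m') ≤ ‖A_m g - ũ‖² - ‖A_{m'} g - ũ‖² ≤ 2 ‖A_m g - ũ‖ ‖A_m - A_{m'}‖ ‖g‖`,
and the right-hand side is bounded by a constant times `‖m - m'‖`. A Lipschitz function on a
nonempty compact set attains its minimum.
-/

open Set

lemma sq_norm_sub_sq_norm_le {E : Type*} [SeminormedAddCommGroup E] (x y : E) :
    ‖x‖ ^ 2 - ‖y‖ ^ 2 ≤ 2 * ‖x‖ * ‖x - y‖ := by
  nlinarith [mul_le_mul_of_nonneg_left (norm_sub_norm_le x y) (norm_nonneg x),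
    sq_nonneg (‖x‖ - ‖y‖)]

section Tikhonov

variable {H K : Type*} [NormedAddCommGroup H] [NormedSpace ℝ H]
  [NormedAddCommGroup K] [NormedSpace ℝ K]

def tikhonov (T : H →L[ℝ] K) (u : K) (C : ℝ) (g : H) : ℝ :=
  ‖T g - u‖ ^ 2 + C * ‖g‖ ^ 2

@[simp]
lemma tikhonov_zero (T : H →L[ℝ] K) (u : K) (C : ℝ) : tikhonov T u C 0 = ‖u‖ ^ 2 := by
  simp [tikhonov]

lemma norm_le_of_tikhonov_le {T : H →L[ℝ] K} {u : K} {C : ℝ} {g : H} (hC : 0 < C)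
    (h : tikhonov T u C g ≤ ‖u‖ ^ 2) : ‖g‖ ≤ ‖u‖ / √C := by
  have hsqrt : 0 < √C := Real.sqrt_pos.2 hC
  rw [le_div_iff₀ hsqrt, ← pow_le_pow_iff_left₀ (by positivity) (norm_nonneg u) two_ne_zero,
    mul_pow, Real.sq_sqrt hC.le]
  unfold tikhonov at h
  nlinarith [sq_nonneg ‖T g - u‖]

lemma tikhonov_sub_tikhonov_le {T S : H →L[ℝ] K} {M : ℝ} (hT : ‖T‖ ≤ M) (u : K) (C : ℝ)
    (g : H) :
    tikhonov T u C g - tikhonov S u C g ≤ 2 * (M * ‖g‖ + ‖u‖) * ‖g‖ * ‖T - S‖ := by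
  have hM : 0 ≤ M := (norm_nonneg T).trans hT
  have hTg : ‖T g - u‖ ≤ M * ‖g‖ + ‖u‖ :=
    (norm_sub_le _ _).trans (by gcongr; exact T.le_of_opNorm_le hT g)
  have hdiff : T g - u - (S g - u) = (T - S) g := by simp
  calc tikhonov T u C g - tikhonov S u C g = ‖T g - u‖ ^ 2 - ‖S g - u‖ ^ 2 := by
        unfold tikhonov; ring
    _ ≤ 2 * ‖T g - u‖ * ‖(T - S) g‖ := hdiff ▸ sq_norm_sub_sq_norm_le _ _
    _ ≤ 2 * (M * ‖g‖ + ‖u‖) * (‖T - S‖ * ‖g‖) := by gcongr; exact (T - S).le_opNorm g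
    _ = 2 * (M * ‖g‖ + ‖u‖) * ‖g‖ * ‖T - S‖ := by ring

lemma tikhonov_min_sub_le {T S : H →L[ℝ] K} {u : K} {C M a b : ℝ} (hC : 0 < C)
    (hT : ‖T‖ ≤ M) (ha : IsLeast (range (tikhonov T u C)) a)
    (hb : IsLeast (range (tikhonov S u C)) b) :
    a - b ≤ 2 * (M * (‖u‖ / √C) + ‖u‖) * (‖u‖ / √C) * ‖T - S‖ := by
  obtain ⟨g, rfl⟩ := hb.1
  have hM : 0 ≤ M := (norm_nonneg T).trans hT
  have hg : ‖g‖ ≤ ‖u‖ / √C :=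
    norm_le_of_tikhonov_le hC (tikhonov_zero S u C ▸ hb.2 ⟨0, rfl⟩)
  calc a - tikhonov S u C g ≤ tikhonov T u C g - tikhonov S u C g :=
        sub_le_sub_right (ha.2 ⟨g, rfl⟩) _
    _ ≤ 2 * (M * ‖g‖ + ‖u‖) * ‖g‖ * ‖T - S‖ := tikhonov_sub_tikhonov_le hT u C g
    _ ≤ _ := by gcongr

end Tikhonov

theorem fC_lipschitz_and_attains_min_general
    {H K : Type*} [NormedAddCommGroup H] [InnerProductSpace ℝ H]
    [NormedAddCommGroup K] [InnerProductSpace ℝ K]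
    (B : Set (EuclideanSpace ℝ (Fin 3))) (hB : IsCompact B) (hBne : B.Nonempty)
    (A : EuclideanSpace ℝ (Fin 3) → (H →L[ℝ] K))
    (L M : ℝ)
    (hLip : ∀ m ∈ B, ∀ m' ∈ B, ‖A m - A m'‖ ≤ L * dist m m')
    (hbdd : ∀ m ∈ B, ‖A m‖ ≤ M)
    (util : K) (C : ℝ) (hC : 0 < C)
    (f : EuclideanSpace ℝ (Fin 3) → ℝ)
    (hf : ∀ m ∈ B, ∀ g : H,
      (f m ≤ ‖A m g - util‖ ^ 2 + C * ‖g‖ ^ 2) ∧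
      ∃ gmin : H, f m = ‖A m gmin - util‖ ^ 2 + C * ‖gmin‖ ^ 2) :
    (∃ L' : ℝ, 0 ≤ L' ∧ ∀ m ∈ B, ∀ m' ∈ B, |f m - f m'| ≤ L' * dist m m') ∧
    ∃ m₀ ∈ B, ∀ m ∈ B, f m₀ ≤ f m := by
  have hmin : ∀ m ∈ B, IsLeast (range (tikhonov (A m) util C)) (f m) := fun m hm =>
    ⟨let ⟨g, hg⟩ := (hf m hm 0).2; ⟨g, hg.symm⟩, forall_mem_range.2 fun g => (hf m hm g).1⟩
  have hM : 0 ≤ M := let ⟨m, hm⟩ := hBne; (norm_nonneg _).trans (hbdd m hm)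
  set c := 2 * (M * (‖util‖ / √C) + ‖util‖) * (‖util‖ / √C)
  have hc : 0 ≤ c := by positivity
  have hsub : ∀ m ∈ B, ∀ m' ∈ B, f m - f m' ≤ c * |L| * dist m m' := fun m hm m' hm' =>
    calc f m - f m' ≤ c * ‖A m - A m'‖ :=
          tikhonov_min_sub_le hC (hbdd m hm) (hmin m hm) (hmin m' hm')
      _ ≤ c * (|L| * dist m m') := by
          gcongr
          exact (hLip m hm m' hm').trans (by gcongr; exact le_abs_self L)
      _ = c * |L| * dist m m' := (mul_assoc _ _ _).symm
  have hlip : LipschitzOnWith ⟨c * |L|, by positivity⟩ f B :=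
    .of_dist_le_mul fun m hm m' hm' => by
      rw [Real.dist_eq, abs_sub_le_iff]
      exact ⟨hsub m hm m' hm', dist_comm m' m ▸ hsub m' hm' m hm⟩
  obtain ⟨m₀, hm₀, hm₀min⟩ := hB.exists_isMinOn hBne hlip.continuousOn
  exact ⟨⟨c * |L|, by positivity, hlip.dist_le_mul⟩, m₀, hm₀, fun m hm => hm₀min hm⟩

theorem fC_lipschitz_and_attains_min
    {H K : Type*} [NormedAddCommGroup H] [InnerProductSpace ℝ H] [CompleteSpace H]
    [NormedAddCommGroup K] [InnerProductSpace ℝ K] [CompleteSpace K]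
    (B : Set (EuclideanSpace ℝ (Fin 3))) (hB : IsCompact B) (hBne : B.Nonempty)
    (A : EuclideanSpace ℝ (Fin 3) → (H →L[ℝ] K))
    (L M : ℝ)
    (hLip : ∀ m ∈ B, ∀ m' ∈ B, ‖A m - A m'‖ ≤ L * dist m m')
    (hbdd : ∀ m ∈ B, ‖A m‖ ≤ M)
    (util : K) (C : ℝ) (hC : 0 < C)
    (f : EuclideanSpace ℝ (Fin 3) → ℝ)
    (hf : ∀ m ∈ B, ∀ g : H,
      (f m ≤ ‖A m g - util‖ ^ 2 + C * ‖g‖ ^ 2) ∧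
      ∃ gmin : H, f m = ‖A m gmin - util‖ ^ 2 + C * ‖gmin‖ ^ 2) :
    (∃ L' : ℝ, 0 ≤ L' ∧ ∀ m ∈ B, ∀ m' ∈ B, |f m - f m'| ≤ L' * dist m m') ∧
    ∃ m₀ ∈ B, ∀ m ∈ B, f m₀ ≤ f m :=
  fC_lipschitz_and_attains_min_general B hB hBne A L M hLip hbdd util C hC f hf
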